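/- On the two-qubit space S = ℂ² ⊗ ℂ², let Z₁ = Z ⊗ I with Z = diag(1,−1), let E(σ) = ½(σ + Z₁σZ₁), and define E♯ : L(S) → L(ℂ²) by E♯(σ) = tr(σ)·ρ₁ + tr(σZ₁)·ρ₂ with ρ₁ = ½(|0⟩⟨0| + |1⟩⟨1|) and ρ₂ = ½(|0⟩⟨1| + |1⟩⟨0|). Then E and E♯ form a complementary pair, and the subspace 𝒞 = span{|00⟩, |01⟩} is a private subspace for E♯: for every σ supported on 𝒞, E♯(σ) = tr(σ)·P, where P = ½(I + X) (with X = |0⟩⟨1| + |1⟩⟨0|) is the rank-one projector onto (|0⟩+|1⟩)/√2. -/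

import Mathlib

/- ## Preliminaries: matrices as operators, superoperators, channels,
     trace norm, diamond norm, complementary pairs, private and
     correctable subsystems. -/

open Matrix
open scoped ComplexOrder Kronecker

noncomputable section

/-- `L(S)`: the space of linear operators on a finite-dimensional complex
Hilbert space `S` with orthonormal basis indexed by `ι`, represented as
matrices. -/
abbrev Mat (ι : Type) : Type := Matrix ι ι ℂ

/-- Superoperators, i.e. linear maps `L(S) → L(S')`. -/
abbrev SupOp (ι κ : Type) : Type := Mat ι →ₗ[ℂ] Mat κ

/-- The conjugation superoperator `σ ↦ V σ V†`. -/
def conjMap {ι κ : Type} [Fintype ι] [Fintype κ] (V : Matrix κ ι ℂ) : SupOp ι κ where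
  toFun σ := V * σ * Vᴴ
  map_add' σ τ := by
    show V * (σ + τ) * Vᴴ = V * σ * Vᴴ + V * τ * Vᴴ
    rw [Matrix.mul_add, Matrix.add_mul]
  map_smul' c σ := by
    show V * (c • σ) * Vᴴ = _
    rw [Matrix.mul_smul, Matrix.smul_mul]; rfl

/-- The partial trace over the second (right) tensor factor,
`tr_κ : L(ι ⊗ κ) → L(ι)`. -/
def ptraceRight {ι κ : Type} [Fintype ι] [Fintype κ] : SupOp (ι × κ) ι where
  toFun σ := Matrix.of fun i j => ∑ x, σ (i, x) (j, x)
  map_add' σ τ := by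
    ext i j
    simp [Finset.sum_add_distrib]
  map_smul' c σ := by
    ext i j
    simp [Finset.mul_sum]

/-- The partial trace over the first (left) tensor factor,
`tr_ι : L(ι ⊗ κ) → L(κ)`. -/
def ptraceLeft {ι κ : Type} [Fintype ι] [Fintype κ] : SupOp (ι × κ) κ where
  toFun σ := Matrix.of fun i j => ∑ x, σ (x, i) (x, j)
  map_add' σ τ := by
    ext i j
    simp [Finset.sum_add_distrib]
  map_smul' c σ := by
    ext i j
    simp [Finset.mul_sum]

/-- The extension `id_τ ⊗ Φ` of a superoperator `Φ` by the identity on a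
tensor factor `τ` on the left. -/
def lExt {ι κ : Type} (τ : Type) (Φ : SupOp ι κ) : SupOp (τ × ι) (τ × κ) where
  toFun σ := Matrix.of fun p q => Φ (Matrix.of fun a b => σ (p.1, a) (q.1, b)) p.2 q.2
  map_add' σ τ' := by
    ext p q
    show Φ (Matrix.of fun a b => (σ + τ') (p.1, a) (q.1, b)) p.2 q.2 = _
    rw [show (Matrix.of fun a b => (σ + τ') (p.1, a) (q.1, b)) =
      (Matrix.of fun a b => σ (p.1, a) (q.1, b)) +
        (Matrix.of fun a b => τ' (p.1, a) (q.1, b)) from rfl, map_add]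
    rfl
  map_smul' c σ := by
    ext p q
    show Φ (Matrix.of fun a b => (c • σ) (p.1, a) (q.1, b)) p.2 q.2 = _
    rw [show (Matrix.of fun a b => (c • σ) (p.1, a) (q.1, b)) =
      c • (Matrix.of fun a b => σ (p.1, a) (q.1, b)) from rfl, _root_.map_smul]
    rfl

/-- The extension `Φ ⊗ id_τ` of a superoperator `Φ` by the identity on a
tensor factor `τ` on the right. -/
def rExt {ι κ : Type} (τ : Type) (Φ : SupOp ι κ) : SupOp (ι × τ) (κ × τ) where
  toFun σ := Matrix.of fun p q => Φ (Matrix.of fun a b => σ (a, p.2) (b, q.2)) p.1 q.1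
  map_add' σ τ' := by
    ext p q
    show Φ (Matrix.of fun a b => (σ + τ') (a, p.2) (b, q.2)) p.1 q.1 = _
    rw [show (Matrix.of fun a b => (σ + τ') (a, p.2) (b, q.2)) =
      (Matrix.of fun a b => σ (a, p.2) (b, q.2)) +
        (Matrix.of fun a b => τ' (a, p.2) (b, q.2)) from rfl, map_add]
    rfl
  map_smul' c σ := by
    ext p q
    show Φ (Matrix.of fun a b => (c • σ) (a, p.2) (b, q.2)) p.1 q.1 = _
    rw [show (Matrix.of fun a b => (c • σ) (a, p.2) (b, q.2)) =
      c • (Matrix.of fun a b => σ (a, p.2) (b, q.2)) from rfl, _root_.map_smul]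
    rfl

/-- The tensor product `Φ ⊗ Ψ` of two superoperators, as a superoperator
`L(ι₁ ⊗ ι₂) → L(κ₁ ⊗ κ₂)`.  It is the unique linear map with
`(Φ ⊗ Ψ)(σ₁ ⊗ σ₂) = Φ(σ₁) ⊗ Ψ(σ₂)`. -/
def tensorSup {ι₁ κ₁ ι₂ κ₂ : Type} (Φ : SupOp ι₁ κ₁) (Ψ : SupOp ι₂ κ₂) :
    SupOp (ι₁ × ι₂) (κ₁ × κ₂) :=
  (lExt κ₁ Ψ).comp (rExt ι₂ Φ)

/-- A superoperator is completely positive if all its extensions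
`id_k ⊗ Φ` map positive semidefinite matrices to positive semidefinite
matrices. -/
def IsCP {ι κ : Type} [Fintype ι] [Fintype κ] (Φ : SupOp ι κ) : Prop :=
  ∀ (k : ℕ) (σ : Mat (Fin k × ι)), σ.PosSemidef → (lExt (Fin k) Φ σ).PosSemidef

/-- Trace preservation. -/
def IsTP {ι κ : Type} [Fintype ι] [Fintype κ] (Φ : SupOp ι κ) : Prop :=
  ∀ σ : Mat ι, (Φ σ).trace = σ.trace

/-- A channel is a completely positive trace-preserving linear map. -/
def IsChannel {ι κ : Type} [Fintype ι] [Fintype κ] (Φ : SupOp ι κ) : Prop :=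
  IsCP Φ ∧ IsTP Φ

/-- A density operator: positive semidefinite with unit trace. -/
def IsDensity {ι : Type} [Fintype ι] (ω : Mat ι) : Prop :=
  ω.PosSemidef ∧ ω.trace = 1

/-- The trace norm `‖σ‖₁ = tr |σ| = tr √(σ† σ)` of a matrix. -/
def traceNorm {ι : Type} [Fintype ι] [DecidableEq ι] (σ : Mat ι) : ℝ :=
  (((Matrix.posSemidef_conjTranspose_mul_self σ).1.eigenvectorUnitary : Mat ι) *
    Matrix.diagonal (fun i => ((Real.sqrt
      ((Matrix.posSemidef_conjTranspose_mul_self σ).1.eigenvalues i) : ℝ) : ℂ)) *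
    (star (Matrix.posSemidef_conjTranspose_mul_self σ).1.eigenvectorUnitary : Mat ι)).trace.re

/-- The superoperator `1`-norm `‖Φ‖₁ = sup_{‖σ‖₁ ≤ 1} ‖Φ(σ)‖₁`. -/
def supNorm1 {ι κ : Type} [Fintype ι] [DecidableEq ι] [Fintype κ] [DecidableEq κ]
    (Φ : SupOp ι κ) : ℝ :=
  sSup {x : ℝ | ∃ σ : Mat ι, traceNorm σ ≤ 1 ∧ x = traceNorm (Φ σ)}

/-- The diamond norm `‖Φ‖◇ = sup_{k ≥ 1} ‖id_k ⊗ Φ‖₁`. -/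
def diamondNorm {ι κ : Type} [Fintype ι] [DecidableEq ι] [Fintype κ] [DecidableEq κ]
    (Φ : SupOp ι κ) : ℝ :=
  ⨆ k : ℕ, supNorm1 (lExt (Fin (k + 1)) Φ)

/-- The operator norm `‖V‖∞` of a (possibly rectangular) matrix `V`. -/
def opNorm {κ ι : Type} [Fintype κ] [Fintype ι] [DecidableEq ι] (V : Matrix κ ι ℂ) : ℝ :=
  ‖LinearMap.toContinuousLinearMap (Matrix.toEuclideanLin V)‖

/-- The trace channel `L(S) → L(ℂ)`, where `ℂ` is the one-dimensional
Hilbert space (indexed by `Unit`). -/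
def trChannel {ι : Type} [Fintype ι] : SupOp ι Unit where
  toFun σ := Matrix.of fun _ _ => σ.trace
  map_add' σ τ := by ext i j; simp [Matrix.trace_add]
  map_smul' c σ := by ext i j; simp

/-- The deletion channel `σ ↦ tr(σ) · ω` determined by a fixed state `ω`. -/
def deletionTo {ι κ : Type} [Fintype ι] (ω : Mat κ) : SupOp ι κ where
  toFun σ := σ.trace • ω
  map_add' σ τ := by
    show (σ + τ).trace • ω = σ.trace • ω + τ.trace • ω
    rw [Matrix.trace_add, add_smul]
  map_smul' c σ := by
    show (c • σ).trace • ω = _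
    rw [Matrix.trace_smul, smul_smul]; rfl

/-- Channels `E : L(S) → L(S')` and `E♯ : L(S) → L(S'')` form a
complementary pair if there is an isometry `V : S → S' ⊗ S''` with
`E(σ) = tr_{S''}(V σ V†)` and `E♯(σ) = tr_{S'}(V σ V†)`. -/
def ComplementaryPair {ι ι' ι'' : Type} [Fintype ι] [DecidableEq ι]
    [Fintype ι'] [Fintype ι''] (E : SupOp ι ι') (Esharp : SupOp ι ι'') : Prop :=
  ∃ V : Matrix (ι' × ι'') ι ℂ, Vᴴ * V = 1 ∧
    (∀ σ, E σ = ptraceRight (V * σ * Vᴴ)) ∧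
    (∀ σ, Esharp σ = ptraceLeft (V * σ * Vᴴ))

section Subsystems

variable {ι ι' A B : Type} [Fintype ι] [DecidableEq ι] [Fintype ι'] [DecidableEq ι']
  [Fintype A] [DecidableEq A] [Fintype B] [DecidableEq B]

/- A subsystem `B` of `S` (with cofactor `A`), realizing the decomposition
`S = (A ⊗ B) ⊕ (A ⊗ B)^⊥`, is encoded by an isometry
`W : A ⊗ B → S` (i.e. `Wᴴ * W = 1`).  The projection superoperator
`P_AB : σ ↦ P σ P` is then conjugation by `P = W Wᴴ`, and a superoperator
`Λ : L(A ⊗ B) → L(A' ⊗ B')` is extended to `L(S)` as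
`conjMap W' ∘ Λ ∘ conjMap Wᴴ` (where `W'` embeds the output). -/

/-- `B` is an `ε`-private subsystem (with cofactor `A`, embedded in `S` via the
isometry `W : A ⊗ B → S`) for the channel `E : L(S) → L(S')`:
there are a channel `M : L(A) → L(A')` and a deletion channel
`D : L(B) → L(B')` (with `A' ⊗ B'` embedded in `S'` via an isometry `W'`)
such that `‖E ∘ P_AB − M ⊗ D‖◇ ≤ ε`. -/
def IsPrivateSub (E : SupOp ι ι') (W : Matrix ι (A × B) ℂ) (ε : ℝ) : Prop :=
  ∃ (a' b' : ℕ) (M : SupOp A (Fin a')) (ω : Mat (Fin b'))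
    (W' : Matrix ι' (Fin a' × Fin b') ℂ),
      IsChannel M ∧ IsDensity ω ∧ W'ᴴ * W' = 1 ∧
      diamondNorm (E ∘ₗ conjMap (W * Wᴴ)
        - conjMap W' ∘ₗ tensorSup M (deletionTo ω) ∘ₗ conjMap Wᴴ) ≤ ε

/-- `B` is an `ε`-correctable subsystem (with cofactor `A`, embedded in `S` via
the isometry `W : A ⊗ B → S`) for the channel `E : L(S) → L(S')`:
there are channels `R : L(S') → L(S)` and `N : L(A) → L(A)` with
`‖R ∘ E ∘ P_AB − N ⊗ id_B‖◇ ≤ ε`. -/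
def IsCorrectableSub (E : SupOp ι ι') (W : Matrix ι (A × B) ℂ) (ε : ℝ) : Prop :=
  ∃ (R : SupOp ι' ι) (N : SupOp A A),
    IsChannel R ∧ IsChannel N ∧
    diamondNorm (R ∘ₗ E ∘ₗ conjMap (W * Wᴴ)
      - conjMap W ∘ₗ tensorSup N (LinearMap.id : SupOp B B) ∘ₗ conjMap Wᴴ) ≤ ε

/-- `B` is a private subsystem (exact version): `E ∘ P_AB = M ⊗ D`. -/
def IsPrivateSubExact (E : SupOp ι ι') (W : Matrix ι (A × B) ℂ) : Prop :=
  ∃ (a' b' : ℕ) (M : SupOp A (Fin a')) (ω : Mat (Fin b'))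
    (W' : Matrix ι' (Fin a' × Fin b') ℂ),
      IsChannel M ∧ IsDensity ω ∧ W'ᴴ * W' = 1 ∧
      E ∘ₗ conjMap (W * Wᴴ)
        = conjMap W' ∘ₗ tensorSup M (deletionTo ω) ∘ₗ conjMap Wᴴ

/-- `B` is a correctable subsystem (exact version): `R ∘ E ∘ P_AB = N ⊗ id_B`. -/
def IsCorrectableSubExact (E : SupOp ι ι') (W : Matrix ι (A × B) ℂ) : Prop :=
  ∃ (R : SupOp ι' ι) (N : SupOp A A),
    IsChannel R ∧ IsChannel N ∧
    R ∘ₗ E ∘ₗ conjMap (W * Wᴴ)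
      = conjMap W ∘ₗ tensorSup N (LinearMap.id : SupOp B B) ∘ₗ conjMap Wᴴ

end Subsystems

namespace TwoQubitExample

/-- The Pauli `Z` matrix `diag(1, −1)`. -/
def Zgate : Mat (Fin 2) := !![1, 0; 0, -1]

/-- The Pauli `X` matrix `|0⟩⟨1| + |1⟩⟨0|`. -/
def Xgate : Mat (Fin 2) := !![0, 1; 1, 0]

/-- `Z₁ = Z ⊗ I` acting on the first qubit of `S = ℂ² ⊗ ℂ²`. -/
def Z₁ : Mat (Fin 2 × Fin 2) := Zgate ⊗ₖ (1 : Mat (Fin 2))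

/-- The two-qubit dephasing channel `E(σ) = ½(σ + Z₁ σ Z₁)`. -/
def Echan : SupOp (Fin 2 × Fin 2) (Fin 2 × Fin 2) where
  toFun σ := (1 / 2 : ℂ) • (σ + Z₁ * σ * Z₁)
  map_add' σ τ := by
    show (1 / 2 : ℂ) • ((σ + τ) + Z₁ * (σ + τ) * Z₁) = _
    rw [Matrix.mul_add, Matrix.add_mul]
    rw [show σ + τ + (Z₁ * σ * Z₁ + Z₁ * τ * Z₁)
        = (σ + Z₁ * σ * Z₁) + (τ + Z₁ * τ * Z₁) by abel, smul_add]
  map_smul' c σ := by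
    show (1 / 2 : ℂ) • ((c • σ) + Z₁ * (c • σ) * Z₁) = _
    rw [Matrix.mul_smul, Matrix.smul_mul, ← smul_add, smul_comm]
    rfl

/-- `ρ₁ = ½(|0⟩⟨0| + |1⟩⟨1|)`. -/
def ρ₁ : Mat (Fin 2) := (1 / 2 : ℂ) • (1 : Mat (Fin 2))

/-- `ρ₂ = ½(|0⟩⟨1| + |1⟩⟨0|)`. -/
def ρ₂ : Mat (Fin 2) := (1 / 2 : ℂ) • Xgate

/-- The complementary channel `E♯(σ) = tr(σ)·ρ₁ + tr(σ Z₁)·ρ₂`. -/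
def Esharp : SupOp (Fin 2 × Fin 2) (Fin 2) where
  toFun σ := σ.trace • ρ₁ + (σ * Z₁).trace • ρ₂
  map_add' σ τ := by
    show (σ + τ).trace • ρ₁ + ((σ + τ) * Z₁).trace • ρ₂ = _
    rw [Matrix.add_mul, Matrix.trace_add, Matrix.trace_add, add_smul, add_smul]
    abel_nf
  map_smul' c σ := by
    show (c • σ).trace • ρ₁ + ((c • σ) * Z₁).trace • ρ₂ = _
    rw [Matrix.smul_mul, Matrix.trace_smul, Matrix.trace_smul, smul_assoc, smul_assoc,
      ← smul_add]
    rfl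

/-- The orthogonal projector onto the code subspace
`𝒞 = span{|00⟩, |01⟩}`, namely `|0⟩⟨0| ⊗ I`. -/
def Pc : Mat (Fin 2 × Fin 2) := (!![1, 0; 0, 0] : Mat (Fin 2)) ⊗ₖ (1 : Mat (Fin 2))

/-- `P = ½(I + X)`, the rank-one projector onto `(|0⟩ + |1⟩)/√2`. -/
def Pproj : Mat (Fin 2) := (1 / 2 : ℂ) • ((1 : Mat (Fin 2)) + Xgate)

/-- Unnormalized dilation isometry. -/
def V1 : Matrix ((Fin 2 × Fin 2) × Fin 2) (Fin 2 × Fin 2) ℂ :=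
  fun pa q => if pa.2 = 0 then (1 : Mat (Fin 2 × Fin 2)) pa.1 q else Z₁ pa.1 q

/-- The dilation isometry. -/
def Viso : Matrix ((Fin 2 × Fin 2) × Fin 2) (Fin 2 × Fin 2) ℂ :=
  ((Real.sqrt 2 : ℂ))⁻¹ • V1

lemma half_V1 (σ : Mat (Fin 2 × Fin 2)) :
    Viso * σ * Visoᴴ = (1 / 2 : ℂ) • (V1 * σ * V1ᴴ) := by
  have hc : ((Real.sqrt 2 : ℂ))⁻¹ * star ((Real.sqrt 2 : ℂ))⁻¹ = 1 / 2 := by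
    have h1 : star ((Real.sqrt 2 : ℂ))⁻¹ = ((Real.sqrt 2 : ℂ))⁻¹ := by
      simp [← Complex.ofReal_inv]
    rw [h1, ← mul_inv, ← Complex.ofReal_mul,
      Real.mul_self_sqrt (by norm_num : (2:ℝ) ≥ 0)]
    norm_num
  rw [Viso, Matrix.conjTranspose_smul, Matrix.smul_mul, Matrix.smul_mul,
    Matrix.mul_smul, smul_smul, hc]

lemma V1_isometry : V1ᴴ * V1 = (2 : ℂ) • 1 := by
  ext ⟨q1, q2⟩ ⟨r1, r2⟩
  simp only [Matrix.mul_apply, Matrix.conjTranspose_apply, V1, Z₁, Zgate,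
    Fintype.sum_prod_type, Fin.sum_univ_two, Matrix.one_apply, Matrix.smul_apply,
    Matrix.kroneckerMap_apply]
  fin_cases q1 <;> fin_cases q2 <;> fin_cases r1 <;> fin_cases r2 <;>
    simp [Matrix.one_apply, Prod.ext_iff] <;> ring

/-- The channels `E(σ) = ½(σ + Z₁ σ Z₁)` and
`E♯(σ) = tr(σ)·ρ₁ + tr(σ Z₁)·ρ₂` form a complementary pair, and the subspace
`𝒞 = span{|00⟩, |01⟩}` is a private subspace for `E♯`: every `σ` supported
on `𝒞` satisfies `E♯(σ) = tr(σ)·P` with `P = ½(I + X)`. -/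
theorem twoQubit_complementary_and_private :
    ComplementaryPair Echan Esharp ∧
      ∀ σ : Mat (Fin 2 × Fin 2),
        Esharp (Pc * σ * Pc) = (Pc * σ * Pc).trace • Pproj := by
  constructor
  · refine ⟨Viso, ?_, ?_, ?_⟩
    · rw [Viso, Matrix.conjTranspose_smul, Matrix.smul_mul, Matrix.mul_smul,
        smul_smul, V1_isometry, smul_smul]
      have h1 : star ((Real.sqrt 2 : ℂ))⁻¹ = ((Real.sqrt 2 : ℂ))⁻¹ := by
        simp [← Complex.ofReal_inv]
      rw [h1]
      have : ((Real.sqrt 2 : ℂ))⁻¹ * ((Real.sqrt 2 : ℂ))⁻¹ = 1 / 2 := by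
        rw [← mul_inv, ← Complex.ofReal_mul,
          Real.mul_self_sqrt (by norm_num : (2:ℝ) ≥ 0)]
        norm_num
      rw [this]
      norm_num
    · intro σ
      rw [half_V1, _root_.map_smul]
      have key : ptraceRight (V1 * σ * V1ᴴ) = σ + Z₁ * σ * Z₁ := by
        ext ⟨i1, i2⟩ ⟨j1, j2⟩
        simp only [ptraceRight, LinearMap.coe_mk, AddHom.coe_mk, Matrix.of_apply,
          Matrix.mul_apply, Matrix.conjTranspose_apply, V1, Z₁, Zgate,
          Fintype.sum_prod_type, Fin.sum_univ_two, Matrix.one_apply,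
          Matrix.kroneckerMap_apply, Matrix.add_apply]
        fin_cases i1 <;> fin_cases i2 <;> fin_cases j1 <;> fin_cases j2 <;>
          simp [Matrix.one_apply, Prod.ext_iff] <;> ring
      rw [key]
      show Echan σ = _
      rfl
    · intro σ
      rw [half_V1, _root_.map_smul]
      have key : ptraceLeft (V1 * σ * V1ᴴ)
          = σ.trace • (1 : Mat (Fin 2)) + (σ * Z₁).trace • Xgate := by
        ext a b
        simp only [ptraceLeft, LinearMap.coe_mk, AddHom.coe_mk, Matrix.of_apply,
          Matrix.mul_apply, Matrix.conjTranspose_apply, V1, Z₁, Zgate, Xgate,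
          Matrix.trace, Matrix.diag, Fintype.sum_prod_type, Fin.sum_univ_two,
          Matrix.one_apply, Matrix.kroneckerMap_apply, Matrix.add_apply,
          Matrix.sub_apply, Matrix.smul_apply, smul_eq_mul]
        fin_cases a <;> fin_cases b <;>
          simp [Matrix.one_apply, Prod.ext_iff] <;> ring
      rw [key]
      show σ.trace • ρ₁ + (σ * Z₁).trace • ρ₂ = _
      rw [ρ₁, ρ₂, smul_comm (σ.trace) ((1/2 : ℂ)),
        smul_comm ((σ * Z₁).trace) ((1/2 : ℂ)), ← smul_add]
  · intro σ
    have hPZ : Pc * Z₁ = Pc := by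
      ext ⟨i1, i2⟩ ⟨j1, j2⟩
      simp only [Matrix.mul_apply, Pc, Z₁, Zgate, Fintype.sum_prod_type,
        Fin.sum_univ_two, Matrix.one_apply, Matrix.kroneckerMap_apply]
      fin_cases i1 <;> fin_cases i2 <;> fin_cases j1 <;> fin_cases j2 <;>
        simp [Matrix.one_apply, Prod.ext_iff]
    show (Pc * σ * Pc).trace • ρ₁ + (Pc * σ * Pc * Z₁).trace • ρ₂ = _
    rw [mul_assoc (Pc * σ) Pc Z₁, hPZ]
    rw [ρ₁, ρ₂, Pproj]
    rw [smul_comm _ ((1/2 : ℂ)), smul_comm _ ((1/2 : ℂ)), ← smul_add, ← smul_add,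
      smul_comm]

end TwoQubitExample
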